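/- arXiv:1905.00784 — 3 statements merged into one kernel-verified Lean document; each statement's English description precedes it below -/
import Mathlib

section
/- For the fixpoint labeling λ* of an initialized reachability game, the maximal finite range satisfies mR(λ*) ≤ O(|V|^{(|V|+3)·(|Π|+2)}); consequently the counter graph 𝐂(λ*), of size |V|·2^{|Π|}·(mR(λ*)+2)^{|Π|}, has size at most exponential in the size of the game. -/
/-!
Every step of the algorithm keeps or updates each label, so the labels only decrease, and a
label becomes finite only through an update, as one more than a finite supremum of costs of
consistent plays. That supremum is bounded by pumping: if a consistent play stays long enough on
one set of visited targets after all pending deadlines have expired, a vertex repeats, and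
repeating the loop forever gives a consistent play that never reaches the target. Hence the
positions of a play at level `t` (number of visited targets), together with their deadlines,
lie before `∑_{s ≤ t} (|V| + 2 ℓ_s)`, where `ℓ_s` bounds the finite labels at level `s`, and
this sum bounds the supremum. By induction on the iteration steps, a finite label at a vertex
with `t` visited targets is at most `(2 ^ m - 1) D_t`, where `m ≤ |V|` counts the finite labels
at that level and `D_t = (1 + (|Π| + 1)|V|)(1 + 2 ^ (|V| + 1)) ^ (|Π| - t)`.
-/

open scoped Classical

namespace SPE

variable {V : Type*} {P : Type*}

/-- Vertices of the extended game: a base vertex together with the set of players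
having already visited their target set. -/
abbrev XV (V P : Type*) := V × Set P

/-- Edges of the extended game induced by base edges `E` and target sets `F`. -/
def XEdge (E : V → V → Prop) (F : P → Set V) (a b : XV V P) : Prop :=
  E a.1 b.1 ∧ b.2 = a.2 ∪ {i | b.1 ∈ F i}

/-- Plays of the extended game starting at `x`. -/
def IsPlay (E : V → V → Prop) (F : P → Set V) (x : XV V P) (ρ : ℕ → XV V P) : Prop :=
  ρ 0 = x ∧ ∀ k, XEdge E F (ρ k) (ρ (k + 1))

/-- Cost of player `i` along the suffix `ρ_{≥ n}`: the least `k` such that `i` belongs to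
the second component of `ρ (n + k)`, and `⊤` if there is no such `k`. -/
noncomputable def costFrom (ρ : ℕ → XV V P) (n : ℕ) (i : P) : ℕ∞ :=
  sInf ((fun k : ℕ => (k : ℕ∞)) '' {k | i ∈ (ρ (n + k)).2})

/-- Cost of player `i` along the play `ρ` of the extended game. -/
noncomputable def cost (ρ : ℕ → XV V P) (i : P) : ℕ∞ := costFrom ρ 0 i

/-- `λ`-consistency of a play. -/
def Consistent (own : V → P) (lam : XV V P → ℕ∞) (ρ : ℕ → XV V P) : Prop :=
  ∀ n, costFrom ρ n (own (ρ n).1) ≤ lam (ρ n)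

/-- The set `Λ(x)` of `λ`-consistent plays from `x`. -/
def Lam (E : V → V → Prop) (F : P → Set V) (own : V → P) (lam : XV V P → ℕ∞)
    (x : XV V P) : Set (ℕ → XV V P) :=
  {ρ | IsPlay E F x ρ ∧ Consistent own lam ρ}

/-- The initial labeling `λ⁰`. -/
noncomputable def lam0 (own : V → P) : XV V P → ℕ∞ :=
  fun v => if own v.1 ∈ v.2 then 0 else ⊤

/-- The labeling update operator. -/
noncomputable def update (E : V → V → Prop) (F : P → Set V) (own : V → P)
    (lam : XV V P → ℕ∞) (v : XV V P) : ℕ∞ :=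
  if own v.1 ∈ v.2 then 0
  else ⨅ w ∈ {w : XV V P | XEdge E F v w},
    (1 + sSup ((fun ρ => cost ρ (own v.1)) '' Lam E F own lam w))

/-- Vertices of the counter graph: an extended vertex with one counter per player. -/
abbrev CV (V P : Type*) := XV V P × (P → ℕ∞)

/-- Edges of the counter graph `𝐂(λ)`. -/
def CEdge (E : V → V → Prop) (F : P → Set V) (own : V → P) (lam : XV V P → ℕ∞)
    (a b : CV V P) : Prop :=
  XEdge E F a.1 b.1 ∧
  ∀ i : P,
    (i ∈ b.1.2 ∧ b.2 i = 0) ∨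
    (i ∉ b.1.2 ∧ own b.1.1 ≠ i ∧ 1 < a.2 i ∧ b.2 i = a.2 i - 1) ∨
    (i ∉ b.1.2 ∧ own b.1.1 = i ∧ 1 < a.2 i ∧ b.2 i = min (a.2 i - 1) (lam b.1))

/-- The starting vertex `v^C` of the counter graph associated with `v`. -/
noncomputable def startC (own : V → P) (lam : XV V P → ℕ∞) (v : XV V P) : CV V P :=
  (v, fun i => if i ∈ v.2 then 0 else if own v.1 = i then lam v else ⊤)

/-- The maximal finite range of `λ` restricted to a set `S` of extended vertices. -/
noncomputable def mR (lam : XV V P → ℕ∞) (S : Set (XV V P)) : ℕ :=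
  sSup {c : ℕ | ∃ w ∈ S, lam w = (c : ℕ∞)}

/-- A quantitative reachability game on `nV` vertices and `nP ≤ nV` players. -/
structure QRGame where
  nV : ℕ
  nP : ℕ
  hV : 2 ≤ nV
  hP : nP ≤ nV
  E : Fin nV → Fin nV → Prop
  total : ∀ v, ∃ w, E v w
  own : Fin nV → Fin nP
  F : Fin nP → Set (Fin nV)

section Plays

variable {E : V → V → Prop} {F : P → Set V} {own : V → P} {lam : XV V P → ℕ∞}
  {x : XV V P} {ρ : ℕ → XV V P} {i : P}

theorem costFrom_le_coe_iff {n m : ℕ} :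
    costFrom ρ n i ≤ m ↔ ∃ k ≤ m, i ∈ (ρ (n + k)).2 := by
  constructor
  · intro h
    by_contra! hc
    have : ((m + 1 : ℕ) : ℕ∞) ≤ costFrom ρ n i := by
      refine le_sInf ?_
      rintro _ ⟨k, hk, rfl⟩
      exact Nat.cast_le.2 (by by_contra! hkm; exact hc k (by omega) hk)
    exact absurd (this.trans h) (by norm_cast; omega)
  · rintro ⟨k, hk, hmem⟩
    exact (sInf_le (Set.mem_image_of_mem (fun k : ℕ => (k : ℕ∞)) hmem)).trans
      (Nat.cast_le.2 hk)

theorem costFrom_eq_top_iff {n : ℕ} : costFrom ρ n i = ⊤ ↔ ∀ k, i ∉ (ρ (n + k)).2 := by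
  rw [costFrom, sInf_eq_top]
  constructor
  · intro h k hk
    exact ENat.natCast_ne_top k (h _ ⟨k, hk, rfl⟩)
  · rintro h _ ⟨k, hk, rfl⟩
    exact absurd hk (h k)

theorem cost_le_of_forall_not_mem {B : ℕ}
    (h : ∀ c : ℕ, (∀ m < c, i ∉ (ρ m).2) → c ≤ B) :
    cost ρ i ≤ B := by
  by_contra! hlt
  have hunreached : ∀ m < B + 1, i ∉ (ρ m).2 := fun m hm hmem => by
    have : cost ρ i ≤ m := costFrom_le_coe_iff.2 ⟨m, le_rfl, by simpa using hmem⟩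
    exact absurd (hlt.trans_le this) (by norm_cast; omega)
  exact absurd (h _ hunreached) (by omega)

theorem Consistent.exists_mem (hρ : Consistent own lam ρ) {m d : ℕ} (hd : lam (ρ m) = d) :
    ∃ k ≤ d, own (ρ m).1 ∈ (ρ (m + k)).2 :=
  costFrom_le_coe_iff.1 (hd ▸ hρ m)

theorem IsPlay.snd_mono (hρ : IsPlay E F x ρ) : Monotone fun n => (ρ n).2 :=
  monotone_nat_of_le_succ fun n => by rw [(hρ.2 n).2]; exact Set.subset_union_left

theorem IsPlay.snd_eq_of_ncard_le [Finite P] (hρ : IsPlay E F x ρ) {m n : ℕ} (hmn : m ≤ n)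
    (h : (ρ n).2.ncard ≤ (ρ m).2.ncard) : (ρ m).2 = (ρ n).2 :=
  Set.eq_of_subset_of_ncard_le (hρ.snd_mono hmn) h

def lassoSucc (p q k : ℕ) : ℕ := if k + 1 = q then p else k + 1

/-- `ρ 0, …, ρ (q - 1)` followed by the loop `ρ p, …, ρ (q - 1)` repeated forever. -/
def lasso (ρ : ℕ → XV V P) (p q n : ℕ) : XV V P := ρ ((lassoSucc p q)^[n] 0)

theorem lassoSucc_iterate_of_add_lt {p q k d : ℕ} (h : k + d < q) :
    (lassoSucc p q)^[d] k = k + d := by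
  induction d with
  | zero => rfl
  | succ d ih =>
    rw [Function.iterate_succ_apply', ih (by omega), lassoSucc, if_neg (by omega), add_assoc]

theorem lassoSucc_iterate_lt {p q k : ℕ} (hpq : p < q) (hk : k < q) (d : ℕ) :
    (lassoSucc p q)^[d] k < q := by
  induction d with
  | zero => exact hk
  | succ d ih =>
    rw [Function.iterate_succ_apply', lassoSucc]
    split_ifs <;> omega

theorem apply_lassoSucc {p q : ℕ} (hloop : ρ p = ρ q) (k : ℕ) :
    ρ (lassoSucc p q k) = ρ (k + 1) := by
  unfold lassoSucc
  split_ifs with h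
  · rw [hloop, h]
  · rfl

theorem IsPlay.lasso (hρ : IsPlay E F x ρ) {p q : ℕ} (hloop : ρ p = ρ q) :
    IsPlay E F x (lasso ρ p q) :=
  ⟨hρ.1, fun n => by
    simp only [SPE.lasso, Function.iterate_succ_apply', apply_lassoSucc hloop]
    exact hρ.2 _⟩

theorem consistent_lasso {p q : ℕ} (hpq : p < q)
    (hρ : ∀ m < q, lam (ρ m) ≠ ⊤ →
      ∃ d : ℕ, m + d < q ∧ (d : ℕ∞) ≤ lam (ρ m) ∧ own (ρ m).1 ∈ (ρ (m + d)).2) :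
    Consistent own lam (lasso ρ p q) := by
  -- from position `n` the lasso continues as `ρ` does from the position `m < q` it is at
  intro n
  have hmq : (lassoSucc p q)^[n] 0 < q := lassoSucc_iterate_lt hpq (by omega) n
  by_cases htop : lam (lasso ρ p q n) = ⊤
  · rw [htop]; exact le_top
  obtain ⟨d, hdq, hd, hmem⟩ := hρ _ hmq htop
  refine (costFrom_le_coe_iff.2 ⟨d, le_rfl, ?_⟩).trans hd
  rwa [SPE.lasso, add_comm, Function.iterate_add_apply, lassoSucc_iterate_of_add_lt hdq]

theorem cost_lasso_eq_top {p q : ℕ} (hpq : p < q) (hi : ∀ m < q, i ∉ (ρ m).2) :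
    cost (lasso ρ p q) i = ⊤ :=
  costFrom_eq_top_iff.2 fun k => hi _ (lassoSucc_iterate_lt hpq (by omega) _)

theorem sSup_cost_eq_top_of_loop (hρ : IsPlay E F x ρ) {p q : ℕ} (hpq : p < q)
    (hloop : ρ p = ρ q)
    (hcons : ∀ m < q, lam (ρ m) ≠ ⊤ →
      ∃ d : ℕ, m + d < q ∧ (d : ℕ∞) ≤ lam (ρ m) ∧ own (ρ m).1 ∈ (ρ (m + d)).2)
    (hi : ∀ m < q, i ∉ (ρ m).2) :
    sSup ((fun ρ => cost ρ i) '' Lam E F own lam x) = ⊤ :=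
  top_unique <| le_sSup
    ⟨lasso ρ p q, ⟨hρ.lasso hloop, consistent_lasso hpq hcons⟩, cost_lasso_eq_top hpq hi⟩

end Plays

theorem exists_lt_le_add_card_apply_eq {α : Type*} [Finite α] (f : ℕ → α) (a : ℕ) :
    ∃ p q, a ≤ p ∧ p < q ∧ q ≤ a + Nat.card α ∧ f p = f q := by
  have := Fintype.ofFinite α
  obtain ⟨p, q, hne, heq⟩ := Fintype.exists_ne_map_eq_of_card_lt
    (fun j : Fin (Nat.card α + 1) => f (a + j)) (by simp [Nat.card_eq_fintype_card])
  have hp := p.isLt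
  have hq := q.isLt
  rcases lt_or_gt_of_ne (Fin.val_ne_of_ne hne) with h | h
  · exact ⟨a + p, a + q, by omega, by omega, by omega, heq⟩
  · exact ⟨a + q, a + p, by omega, by omega, by omega, heq.symm⟩

section Pumping

variable [Finite V] [Finite P] {E : V → V → Prop} {F : P → Set V} {own : V → P}
  {lam : XV V P → ℕ∞} {x : XV V P} {ρ : ℕ → XV V P} {i : P} {ℓ : ℕ → ℕ}

/-- Some vertex repeats within `[a, a + |V|]`. Deadlines opened at lower levels are met before
`a`, and those opened at the level of `n` would fall inside `[a, n]`, where the visited targets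
no longer change, so they are met at once: the loop can be pumped. -/
theorem sSup_cost_eq_top_of_stagnant (hρ : ρ ∈ Lam E F own lam x)
    (hl : ∀ w, x.2 ⊆ w.2 → ∀ c : ℕ, lam w = c → c ≤ ℓ w.2.ncard) {a n : ℕ}
    (hlate : a + Nat.card V + ℓ (ρ n).2.ncard ≤ n)
    (hearly : ∀ m ≤ n, (ρ m).2.ncard < (ρ n).2.ncard → m + ℓ (ρ m).2.ncard < a)
    (hi : ∀ m ≤ n, i ∉ (ρ m).2) :
    sSup ((fun ρ => cost ρ i) '' Lam E F own lam x) = ⊤ := by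
  obtain ⟨hplay, hcons⟩ := hρ
  have hlevel : ∀ m ≤ n, a ≤ m → (ρ m).2.ncard = (ρ n).2.ncard := fun m hmn ham =>
    le_antisymm (Set.ncard_le_ncard (hplay.snd_mono hmn))
      (not_lt.1 fun h => by have := hearly m hmn h; omega)
  obtain ⟨p, q, hap, hpq, hqa, hvert⟩ := exists_lt_le_add_card_apply_eq (fun m => (ρ m).1) a
  have hloop : ρ p = ρ q := Prod.ext hvert
    (hplay.snd_eq_of_ncard_le hpq.le (by rw [hlevel q (by omega) (by omega),
      hlevel p (by omega) hap]))
  refine sSup_cost_eq_top_of_loop hplay hpq hloop (fun m hmq htop => ?_)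
    (fun m hm => hi m (by omega))
  obtain ⟨dc, hdc⟩ := ENat.ne_top_iff_exists.1 htop
  obtain ⟨d, hd, hmem⟩ := hcons.exists_mem hdc.symm
  have hdl : dc ≤ ℓ (ρ m).2.ncard :=
    hl _ (hplay.1 ▸ hplay.snd_mono (Nat.zero_le m)) dc hdc.symm
  have hmn : (ρ m).2 ⊆ (ρ n).2 := hplay.snd_mono (show m ≤ n by omega)
  rcases (Set.ncard_le_ncard hmn).lt_or_eq with hlt | heq
  · have := hearly m (by omega) hlt
    exact ⟨d, by omega, hdc ▸ Nat.cast_le.2 hd, hmem⟩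
  · rw [heq] at hdl
    refine ⟨0, by omega, by simp, ?_⟩
    rwa [add_zero, hplay.snd_eq_of_ncard_le (show m ≤ m + d by omega)
      (heq ▸ Set.ncard_le_ncard (hplay.snd_mono (show m + d ≤ n by omega)))]

theorem add_lt_sum_of_ncard_lt (hρ : ρ ∈ Lam E F own lam x)
    (hl : ∀ w, x.2 ⊆ w.2 → ∀ c : ℕ, lam w = c → c ≤ ℓ w.2.ncard)
    (hsup : sSup ((fun ρ => cost ρ i) '' Lam E F own lam x) ≠ ⊤) (u : ℕ) :
    ∀ n, (ρ n).2.ncard < u → (∀ m ≤ n, i ∉ (ρ m).2) →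
      n + ℓ (ρ n).2.ncard < ∑ t ∈ Finset.Ico x.2.ncard u, (Nat.card V + 2 * ℓ t) := by
  induction u with
  | zero => intro n hn; omega
  | succ u ih =>
    intro n hn hi
    rcases (Nat.lt_succ_iff.1 hn).lt_or_eq with hlt | rfl
    · exact (ih n hlt hi).trans_le
        (Finset.sum_le_sum_of_subset (Finset.Ico_subset_Ico_right (by omega)))
    · have hxn : x.2.ncard ≤ (ρ n).2.ncard :=
        Set.ncard_le_ncard (hρ.1.1 ▸ hρ.1.snd_mono (Nat.zero_le n))
      rw [Finset.sum_Ico_succ_top hxn]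
      by_contra! hge
      exact hsup (sSup_cost_eq_top_of_stagnant hρ hl (by omega)
        (fun m hmn hm => ih m hm fun k hk => hi k (by omega)) hi)

theorem sSup_cost_le_sum
    (hl : ∀ w, x.2 ⊆ w.2 → ∀ c : ℕ, lam w = c → c ≤ ℓ w.2.ncard)
    (hsup : sSup ((fun ρ => cost ρ i) '' Lam E F own lam x) ≠ ⊤) :
    sSup ((fun ρ => cost ρ i) '' Lam E F own lam x) ≤
      ((∑ t ∈ Finset.Icc x.2.ncard (Nat.card P), (Nat.card V + 2 * ℓ t) : ℕ) : ℕ∞) := by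
  refine sSup_le ?_
  rintro _ ⟨ρ, hρ, rfl⟩
  refine cost_le_of_forall_not_mem fun c hc => ?_
  rcases Nat.eq_zero_or_pos c with rfl | hc0
  · exact Nat.zero_le _
  have := add_lt_sum_of_ncard_lt hρ hl hsup (Nat.card P + 1) (c - 1)
    (Nat.lt_succ_of_le (Set.ncard_le_card _)) fun m hm => hc m (by omega)
  rw [Finset.Ico_add_one_right_eq_Icc] at this
  omega

end Pumping

def IsUpdateRun (E : V → V → Prop) (F : P → Set V) (own : V → P)
    (lam : ℕ → XV V P → ℕ∞) : Prop :=
  lam 0 = lam0 own ∧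
    ∀ k w, lam (k + 1) w = lam k w ∨ lam (k + 1) w = update E F own (lam k) w

section Runs

variable {E : V → V → Prop} {F : P → Set V} {own : V → P}

theorem isUpdateRun_min {lam : ℕ → XV V P → ℕ∞} {K : ℕ} (h0 : lam 0 = lam0 own)
    (hstep : ∀ k < K, ∀ w,
      lam (k + 1) w = lam k w ∨ lam (k + 1) w = update E F own (lam k) w) :
    IsUpdateRun E F own fun k => lam (min k K) := by
  refine ⟨by simpa using h0, fun k w => ?_⟩
  rcases lt_or_ge k K with hk | hk
  · simpa [min_eq_left hk.le, min_eq_left (Nat.succ_le_of_lt hk)] using hstep k hk w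
  · left
    simp [min_eq_right hk, min_eq_right (Nat.le_succ_of_le hk)]

theorem update_mono {l l' : XV V P → ℕ∞} (h : ∀ w, l w ≤ l' w) (w : XV V P) :
    update E F own l w ≤ update E F own l' w := by
  unfold update
  split
  · exact le_rfl
  · refine iInf₂_mono fun w' _ => add_le_add_right (sSup_le_sSup (Set.image_mono ?_)) 1
    exact fun ρ hρ => ⟨hρ.1, fun n => (hρ.2 n).trans (h _)⟩

theorem update_lam0_le (w : XV V P) : update E F own (lam0 own) w ≤ lam0 own w := by
  by_cases h : own w.1 ∈ w.2 <;> simp [update, lam0, h]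

namespace IsUpdateRun

variable {lam : ℕ → XV V P → ℕ∞}

theorem update_le (h : IsUpdateRun E F own lam) (k : ℕ) (w : XV V P) :
    update E F own (lam k) w ≤ lam k w := by
  induction k generalizing w with
  | zero => rw [h.1]; exact update_lam0_le w
  | succ k ih =>
    have hle : ∀ w, lam (k + 1) w ≤ lam k w := fun w => by
      rcases h.2 k w with e | e <;> rw [e]
      exact ih w
    rcases h.2 k w with e | e <;> rw [e]
    · exact (update_mono hle w).trans (ih w)
    · exact update_mono hle w

theorem succ_le (h : IsUpdateRun E F own lam) (k : ℕ) (w : XV V P) :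
    lam (k + 1) w ≤ lam k w := by
  rcases h.2 k w with e | e <;> rw [e]
  exact h.update_le k w

end IsUpdateRun

end Runs

/-- Closed form of the recursion `levelBound_eq_one_add_sum` imposed by the pumping bound. -/
def levelBound (nV nP t : ℕ) : ℕ := (1 + (nP + 1) * nV) * (1 + 2 ^ (nV + 1)) ^ (nP - t)

theorem levelBound_eq_mul {nV nP t : ℕ} (ht : t < nP) :
    levelBound nV nP t = (1 + 2 ^ (nV + 1)) * levelBound nV nP (t + 1) := by
  rw [levelBound, levelBound, show nP - t = nP - (t + 1) + 1 by omega, pow_succ]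
  ring

theorem levelBound_eq_one_add_sum (nV nP t : ℕ) :
    levelBound nV nP t =
      1 + (nP + 1) * nV + 2 * ∑ u ∈ Finset.Ioc t nP, 2 ^ nV * levelBound nV nP u := by
  induction h : nP - t generalizing t with
  | zero => rw [Finset.Ioc_eq_empty (by omega), levelBound, h]; simp
  | succ j ih =>
    have hnext := ih (t + 1) (by omega)
    rw [levelBound_eq_mul (by omega), ← Finset.Icc_add_one_left_eq_Ioc,
      Finset.Icc_eq_cons_Ioc (by omega), Finset.sum_cons, pow_succ]
    linarith

theorem mul_levelBound_le {nV nP s t : ℕ} (hts : t < s) (hs : s ≤ nP) :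
    (1 + 2 ^ (nV + 1)) * levelBound nV nP s ≤ levelBound nV nP t := by
  rw [levelBound, levelBound, mul_left_comm, ← pow_succ']
  exact Nat.mul_le_mul_left _ (Nat.pow_le_pow_right (by positivity) (by omega))

theorem levelBound_le_zero (nV nP t : ℕ) : levelBound nV nP t ≤ levelBound nV nP 0 :=
  Nat.mul_le_mul_left _ (Nat.pow_le_pow_right (by positivity) (by omega))

theorem two_pow_succ_sub_one_mul (m D : ℕ) :
    (2 ^ (m + 1) - 1) * D = D + 2 * ((2 ^ m - 1) * D) := by
  obtain ⟨B, hB⟩ : ∃ B, 2 ^ m = B + 1 :=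
    ⟨2 ^ m - 1, by have := Nat.one_le_two_pow (n := m); omega⟩
  rw [pow_succ, hB, show (B + 1) * 2 - 1 = 2 * B + 1 by omega, Nat.add_sub_cancel]
  ring

theorem sum_Icc_update_le {nV nP s : ℕ} (g : ℕ → ℕ) (b : ℕ) (hs : s ≤ nP) :
    ∑ t ∈ Finset.Icc s nP, (nV + 2 * Function.update g s b t) ≤
      (nP + 1) * nV + 2 * b + 2 * ∑ u ∈ Finset.Ioc s nP, g u := by
  rw [Finset.Icc_eq_cons_Ioc hs, Finset.sum_cons, Function.update_self,
    Finset.sum_congr rfl fun u hu => by rw [Function.update_of_ne (Finset.mem_Ioc.1 hu).1.ne'],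
    Finset.sum_add_distrib, Finset.sum_const, Nat.card_Ioc, smul_eq_mul, ← Finset.mul_sum]
  have : (nP - s) * nV ≤ nP * nV := Nat.mul_le_mul_right _ (Nat.sub_le _ _)
  nlinarith

section LabelBounds

variable {E : V → V → Prop} {F : P → Set V} {own : V → P}

noncomputable def finiteCount (lam : XV V P → ℕ∞) (S : Set P) : ℕ :=
  {v : V | lam (v, S) ≠ ⊤}.ncard

theorem finiteCount_le_card [Finite V] (lam : XV V P → ℕ∞) (S : Set P) :
    finiteCount lam S ≤ Nat.card V :=
  Set.ncard_le_card _

theorem finiteCount_le_finiteCount [Finite V] {lam lam' : XV V P → ℕ∞}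
    (h : ∀ w, lam' w ≤ lam w) (S : Set P) : finiteCount lam S ≤ finiteCount lam' S :=
  Set.ncard_le_ncard fun _ hv => ne_top_of_le_ne_top hv (h _)

theorem finiteCount_lt_finiteCount [Finite V] {lam lam' : XV V P → ℕ∞}
    (h : ∀ w, lam' w ≤ lam w) {w : XV V P} (hw : lam w = ⊤) (hw' : lam' w ≠ ⊤) :
    finiteCount lam w.2 < finiteCount lam' w.2 :=
  Set.ncard_lt_ncard ⟨fun _ hv => ne_top_of_le_ne_top hv (h _), fun hsub => hsub hw' hw⟩

/-- A label that becomes finite is at most `D + 2 b` where `b` bounds the labels already finite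
at its level, so `m` finite labels at a level are at most `(2 ^ m - 1) D`. -/
def LabelBounded (lam : XV V P → ℕ∞) : Prop :=
  ∀ w (c : ℕ), lam w = c →
    c ≤ (2 ^ finiteCount lam w.2 - 1) * levelBound (Nat.card V) (Nat.card P) w.2.ncard

theorem labelBounded_lam0 : LabelBounded (lam0 own : XV V P → ℕ∞) := by
  intro w c hc
  unfold lam0 at hc
  split_ifs at hc
  · simp [show c = 0 by exact_mod_cast hc.symm]
  · exact absurd hc.symm (ENat.natCast_ne_top c)

theorem LabelBounded.le_two_pow_card_mul [Finite V] {lam : XV V P → ℕ∞} (h : LabelBounded lam)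
    {w : XV V P} {c : ℕ} (hc : lam w = c) :
    c ≤ 2 ^ Nat.card V * levelBound (Nat.card V) (Nat.card P) w.2.ncard :=
  (h w c hc).trans (Nat.mul_le_mul_right _
    ((Nat.sub_le _ _).trans (Nat.pow_le_pow_right two_pos (finiteCount_le_card _ _))))

theorem LabelBounded.one_add_sSup_cost_le [Finite V] [Finite P] {lam : XV V P → ℕ∞}
    (h : LabelBounded lam) {x : XV V P} {i : P}
    (hsup : sSup ((fun ρ => cost ρ i) '' Lam E F own lam x) ≠ ⊤) :
    1 + sSup ((fun ρ => cost ρ i) '' Lam E F own lam x) ≤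
      ((2 ^ (finiteCount lam x.2 + 1) - 1) *
        levelBound (Nat.card V) (Nat.card P) x.2.ncard : ℕ) := by
  have hD := levelBound_eq_one_add_sum (Nat.card V) (Nat.card P) x.2.ncard
  -- the labels at the level of `x` get their sharp bound, those above it the crude one
  set D := levelBound (Nat.card V) (Nat.card P)
  set eb := (2 ^ finiteCount lam x.2 - 1) * D x.2.ncard
  have hl : ∀ w, x.2 ⊆ w.2 → ∀ c : ℕ, lam w = c →
      c ≤ Function.update (fun u => 2 ^ Nat.card V * D u) x.2.ncard eb w.2.ncard := by
    intro w hw c hc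
    rcases (Set.ncard_le_ncard hw).lt_or_eq with hlt | heq
    · rw [Function.update_of_ne hlt.ne']
      exact h.le_two_pow_card_mul hc
    · rw [← heq, Function.update_self]
      exact h (w.1, x.2) c (by rw [Set.eq_of_subset_of_ncard_le hw heq.ge]; exact hc)
  have hsum := sum_Icc_update_le (nV := Nat.card V) (fun u => 2 ^ Nat.card V * D u) eb
    (Set.ncard_le_card x.2)
  calc 1 + sSup ((fun ρ => cost ρ i) '' Lam E F own lam x)
      ≤ 1 + _ := add_le_add_right (sSup_cost_le_sum hl hsup) 1
    _ ≤ _ := by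
      rw [two_pow_succ_sub_one_mul]
      norm_cast
      omega

theorem LabelBounded.update_le [Finite V] [Finite P] {lam : XV V P → ℕ∞}
    (h : LabelBounded lam) {w : XV V P} {c : ℕ} (hc : update E F own lam w = c) :
    c ≤ (2 ^ (finiteCount lam w.2 + 1) - 1) *
      levelBound (Nat.card V) (Nat.card P) w.2.ncard := by
  unfold update at hc
  split_ifs at hc with hown
  · simp [show c = 0 by exact_mod_cast hc.symm]
  obtain ⟨w', hedge, hsup⟩ : ∃ w', XEdge E F w w' ∧
      sSup ((fun ρ => cost ρ (own w.1)) '' Lam E F own lam w') ≠ ⊤ := by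
    by_contra! hall
    refine ENat.natCast_ne_top c (hc ▸ iInf₂_eq_top.2 fun w' hw' => ?_)
    rw [hall w' hw', add_top]
  have hcw : c ≤ (2 ^ (finiteCount lam w'.2 + 1) - 1) *
      levelBound (Nat.card V) (Nat.card P) w'.2.ncard := by
    have : (c : ℕ∞) ≤ _ := hc ▸ (iInf₂_le w' hedge).trans (h.one_add_sSup_cost_le hsup)
    exact_mod_cast this
  have hsub : w.2 ⊆ w'.2 := hedge.2 ▸ Set.subset_union_left
  rcases (Set.ncard_le_ncard hsub).lt_or_eq with hlt | heq
  · have hcount : 2 ^ (finiteCount lam w'.2 + 1) ≤ 2 ^ (Nat.card V + 1) :=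
      Nat.pow_le_pow_right two_pos (Nat.succ_le_succ (finiteCount_le_card lam w'.2))
    calc c ≤ _ := hcw
      _ ≤ (1 + 2 ^ (Nat.card V + 1)) * levelBound (Nat.card V) (Nat.card P) w'.2.ncard :=
        Nat.mul_le_mul_right _ ((Nat.sub_le _ _).trans (hcount.trans (Nat.le_add_left _ _)))
      _ ≤ levelBound (Nat.card V) (Nat.card P) w.2.ncard :=
        mul_levelBound_le hlt (Set.ncard_le_card _)
      _ ≤ _ := Nat.le_mul_of_pos_left _ (by
        have := Nat.one_lt_two_pow (n := finiteCount lam w.2 + 1) (by omega); omega)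
  · rwa [Set.eq_of_subset_of_ncard_le hsub heq.ge]

theorem IsUpdateRun.labelBounded [Finite V] [Finite P] {lam : ℕ → XV V P → ℕ∞}
    (h : IsUpdateRun E F own lam) (k : ℕ) : LabelBounded (lam k) := by
  induction k with
  | zero => rw [h.1]; exact labelBounded_lam0
  | succ k ih =>
    intro w c hc
    have hle := h.succ_le k
    by_cases htop : lam k w = ⊤
    · have hupd : update E F own (lam k) w = c := by
        rcases h.2 k w with e | e
        · exact absurd (htop.symm.trans (e.symm.trans hc)) (ENat.top_ne_natCast c)
        · exact e.symm.trans hc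
      have hcount := finiteCount_lt_finiteCount hle htop (hc ▸ ENat.natCast_ne_top c)
      exact (ih.update_le hupd).trans (Nat.mul_le_mul_right _
        (Nat.sub_le_sub_right (Nat.pow_le_pow_right two_pos hcount) 1))
    · obtain ⟨c', hc'⟩ := ENat.ne_top_iff_exists.1 htop
      have hcc' : c ≤ c' := by
        have := hle w
        rw [hc, ← hc'] at this
        exact_mod_cast this
      exact hcc'.trans ((ih w c' hc'.symm).trans (Nat.mul_le_mul_right _
        (Nat.sub_le_sub_right (Nat.pow_le_pow_right two_pos
          (finiteCount_le_finiteCount hle _)) 1)))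

theorem mR_le_of_forall {lam : XV V P → ℕ∞} {S : Set (XV V P)} {B : ℕ}
    (h : ∀ w ∈ S, ∀ c : ℕ, lam w = c → c ≤ B) : mR lam S ≤ B :=
  csSup_le' fun _ ⟨w, hw, hc⟩ => h w hw _ hc

theorem IsUpdateRun.mR_le [Finite V] [Finite P] {lam : ℕ → XV V P → ℕ∞}
    (h : IsUpdateRun E F own lam) (k : ℕ) :
    mR (lam k) Set.univ ≤ 2 ^ Nat.card V * levelBound (Nat.card V) (Nat.card P) 0 :=
  mR_le_of_forall fun _ _ _ hc => ((h.labelBounded k).le_two_pow_card_mul hc).trans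
    (Nat.mul_le_mul_left _ (levelBound_le_zero _ _ _))

end LabelBounds

theorem two_pow_mul_levelBound_le {n m : ℕ} (hn : 2 ≤ n) (hm : m ≤ n) :
    2 ^ n * levelBound n m 0 ≤ n ^ ((n + 3) * (m + 2)) := by
  have h1 : 2 ^ n ≤ n ^ n := Nat.pow_le_pow_left hn n
  have h2 : 1 + (m + 1) * n ≤ n ^ 3 :=
    calc 1 + (m + 1) * n ≤ 2 * n * n := by nlinarith
      _ ≤ n * n * n := Nat.mul_le_mul_right _ (Nat.mul_le_mul_right _ hn)
      _ = n ^ 3 := by ring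
  have h3 : 1 + 2 ^ (n + 1) ≤ n ^ (n + 2) :=
    calc 1 + 2 ^ (n + 1) ≤ 2 ^ (n + 2) := by
          rw [pow_succ 2 (n + 1)]; have := Nat.one_le_two_pow (n := n + 1); omega
      _ ≤ n ^ (n + 2) := Nat.pow_le_pow_left hn _
  calc 2 ^ n * levelBound n m 0 = 2 ^ n * ((1 + (m + 1) * n) * (1 + 2 ^ (n + 1)) ^ m) := by
        rw [levelBound, Nat.sub_zero]
    _ ≤ n ^ n * (n ^ 3 * (n ^ (n + 2)) ^ m) := by gcongr
    _ = n ^ (n + 3 + (n + 2) * m) := by ring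
    _ ≤ n ^ ((n + 3) * (m + 2)) := Nat.pow_le_pow_right (by omega) (by nlinarith)

theorem mul_two_pow_mul_add_two_pow_le {n m M : ℕ} (hn : 2 ≤ n) (hm : m ≤ n)
    (hM : M ≤ n ^ ((n + 3) * (m + 2))) : n * 2 ^ m * (M + 2) ^ m ≤ 2 ^ (8 * n ^ 8) := by
  have hE : (n + 3) * (m + 2) + 1 ≤ 7 * n ^ 2 := by nlinarith
  have hpos : 2 ≤ n ^ ((n + 3) * (m + 2)) :=
    hn.trans (Nat.le_self_pow (by positivity) n)
  have hM2 : M + 2 ≤ n ^ (7 * n ^ 2) :=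
    calc M + 2 ≤ n ^ ((n + 3) * (m + 2)) * n := by nlinarith
      _ = n ^ ((n + 3) * (m + 2) + 1) := (pow_succ _ _).symm
      _ ≤ n ^ (7 * n ^ 2) := Nat.pow_le_pow_right (by omega) hE
  calc n * 2 ^ m * (M + 2) ^ m ≤ n * n ^ n * (n ^ (7 * n ^ 2)) ^ n :=
        Nat.mul_le_mul (Nat.mul_le_mul_left _
          ((Nat.pow_le_pow_left hn m).trans (Nat.pow_le_pow_right (by omega) hm)))
          ((Nat.pow_le_pow_left hM2 m).trans (Nat.pow_le_pow_right (by positivity) hm))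
    _ = n ^ (1 + n + 7 * n ^ 3) := by ring
    _ ≤ n ^ (8 * n ^ 3) := Nat.pow_le_pow_right (by omega) (by nlinarith)
    _ ≤ (2 ^ n) ^ (8 * n ^ 3) := Nat.pow_le_pow_left Nat.lt_two_pow_self.le _
    _ = 2 ^ (8 * n ^ 4) := by ring
    _ ≤ 2 ^ (8 * n ^ 8) := Nat.pow_le_pow_right two_pos (by gcongr <;> omega)

theorem exists_apply_succ_lt_le_apply {f : ℕ → ℕ} {N k : ℕ} (hN : 1 ≤ N) (hfN : f N = 0)
    (hk : 0 < k) (hk1 : k ≤ f 1) : ∃ n, 1 ≤ n ∧ n < N ∧ f (n + 1) < k ∧ k ≤ f n := by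
  have hex : ∃ j, f (j + 1) < k := ⟨N - 1, by rwa [Nat.sub_add_cancel hN, hfN]⟩
  have hpos : 1 ≤ Nat.find hex := Nat.one_le_iff_ne_zero.2 fun h0 => by
    have := Nat.find_spec hex
    rw [h0, zero_add] at this
    omega
  refine ⟨Nat.find hex, hpos, ?_, Nat.find_spec hex, ?_⟩
  · have := Nat.find_min' hex (show f (N - 1 + 1) < k by rwa [Nat.sub_add_cancel hN, hfN])
    omega
  · have := Nat.find_min hex (show Nat.find hex - 1 < Nat.find hex by omega)
    rwa [Nat.sub_add_cancel hpos, not_lt] at this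

/-- for the fixpoint labeling `λ*` computed by the region-by-region
algorithm, the maximal finite range satisfies `mR(λ*) ≤ O(|V|^{(|V|+3)(|Π|+2)})`;
consequently the counter graph `𝐂(λ*)`, of size `|V|·2^{|Π|}·(mR(λ*)+2)^{|Π|}`, has
size at most exponential in the size of the game. -/
theorem stmt15 :
    ∃ C : ℕ, ∀ (G : QRGame)
      (lam : ℕ → XV (Fin G.nV) (Fin G.nP) → ℕ∞)
      (N : ℕ) (J : ℕ → Set (Fin G.nP))
      (rk : XV (Fin G.nV) (Fin G.nP) → ℕ) (kstar : ℕ → ℕ),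
      lam 0 = lam0 G.own →
      (∀ w, 1 ≤ rk w ∧ rk w ≤ N ∧ w.2 = J (rk w)) →
      (∀ a b, XEdge G.E G.F a b → rk a ≤ rk b) →
      (∀ a b, 1 ≤ a → a ≤ N → 1 ≤ b → b ≤ N → J a ⊆ J b → a ≤ b) →
      kstar N = 0 →
      (∀ n, 1 ≤ n → n < N → kstar (n + 1) < kstar n) →
      (∀ k, k ≤ kstar N → ∀ w,
        (rk w < N → lam (k + 1) w = lam k w) ∧
        (N ≤ rk w → lam (k + 1) w = update G.E G.F G.own (lam k) w)) →
      (∀ n, 1 ≤ n → n < N → ∀ k, kstar (n + 1) < k → k ≤ kstar n → ∀ w,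
        (rk w < n → lam (k + 1) w = lam k w) ∧
        (n ≤ rk w → lam (k + 1) w = update G.E G.F G.own (lam k) w)) →
      (∀ n, 1 ≤ n → n ≤ N → ∀ m w, n ≤ rk w →
        lam (kstar n + m) w = lam (kstar n) w) →
      mR (lam (kstar 1)) Set.univ ≤ C * G.nV ^ ((G.nV + 3) * (G.nP + 2)) ∧
      G.nV * 2 ^ G.nP * (mR (lam (kstar 1)) Set.univ + 2) ^ G.nP ≤
        2 ^ (C * G.nV ^ C) := by
  refine ⟨8, fun G lam N J rk kstar h0 hrk _ _ hkN _ hA hB _ => ?_⟩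
  have hN : 1 ≤ N := by
    obtain ⟨h1, h2, -⟩ := hrk (⟨0, by have := G.hV; omega⟩, ∅)
    omega
  have hstep : ∀ k < kstar 1, ∀ w, lam (k + 1) w = lam k w ∨
      lam (k + 1) w = update G.E G.F G.own (lam k) w := by
    intro k hk w
    rcases Nat.eq_zero_or_pos k with rfl | hk0
    · exact (lt_or_ge (rk w) N).imp (hA 0 (Nat.zero_le _) w).1 (hA 0 (Nat.zero_le _) w).2
    · obtain ⟨n, hn1, hnN, hlt, hle⟩ := exists_apply_succ_lt_le_apply hN hkN hk0 hk.le
      exact (lt_or_ge (rk w) n).imp (hB n hn1 hnN k hlt hle w).1 (hB n hn1 hnN k hlt hle w).2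
  have hmR : mR (lam (kstar 1)) Set.univ ≤ G.nV ^ ((G.nV + 3) * (G.nP + 2)) := by
    have := (isUpdateRun_min h0 hstep).mR_le (kstar 1)
    simp only [min_self, Nat.card_fin] at this
    exact this.trans (two_pow_mul_levelBound_le G.hV G.hP)
  exact ⟨hmR.trans (Nat.le_mul_of_pos_left _ (by norm_num)),
    mul_two_pow_mul_add_two_pow_le G.hV G.hP hmR⟩
end SPE
end

section
/- There exists an SPE of the initialized reachability game (G,v₀) whose cost profile c satisfies x ≤ c ≤ y if and only if the counter graph 𝐂(λ*) contains an infinite path from the starting vertex x₀^C that is a lasso h g^ω with |hg| ≤ d + 2·|𝐂(λ*)|, where d = max{x_i : x_i < +∞}, and whose corresponding play has cost profile between x and y. -/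
/-!
A path of `𝐂(λ*)` from `x₀^C` projects to a `λ*`-consistent play, because its counters bound
the remaining costs. Conversely, a `λ*`-consistent play lifts to the path of `𝐂(λ*)` whose
counters are obtained by running the edge rule of `𝐂(λ*)` along the play. Together with the
characterization of SPE outcomes as `λ*`-consistent plays, this gives the equivalence without
the length bound.

For the bound, note that the counters are at most `max λ*` or `+∞`, so the lifted path stays in a
set of at most `|𝐂(λ*)|` vertices. Keep its first `d` positions: this fixes every cost below `d`,
and hence the lower bounds `x`. After the set of visited players has stabilised, a vertex repeats
within `|𝐂(λ*)|` steps. Cut every cycle out of the path between position `d` and that repetition,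
then repeat the cycle closed there forever. Each position of the new path either moves forward
in the old path or lands after stabilisation, so costs can only drop, and the upper bounds `y`
are preserved.
-/

open scoped Classical

namespace SPE

variable {V : Type*} {P : Type*}

/-- Prepend a finite list in front of an infinite sequence. -/
def listAppendSeq {α : Type*} (h : List α) (ρ : ℕ → α) : ℕ → α :=
  fun k => if hk : k < h.length then h.get ⟨k, hk⟩ else ρ (k - h.length)

/-- Validity of a strategy profile in the extended game: the prescribed moves follow edges. -/
def StratValid (E : V → V → Prop) (F : P → Set V)
    (σ : List (XV V P) → XV V P → XV V P) : Prop :=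
  ∀ h v, XEdge E F v (σ h v)

/-- The outcome of a strategy profile after history `h` from vertex `v`. -/
def outcome (σ : List (XV V P) → XV V P → XV V P) :
    List (XV V P) → XV V P → ℕ → XV V P
  | _, v, 0 => v
  | h, v, n + 1 => outcome σ (h ++ [v]) (σ h v) n

/-- `h·v` is a history of the initialized extended game `(X, x0)`. -/
def IsHistoryFrom (E : V → V → Prop) (F : P → Set V) (x0 : XV V P)
    (h : List (XV V P)) (v : XV V P) : Prop :=
  (h ++ [v]).head? = some x0 ∧ (h ++ [v]).Chain' (XEdge E F)

/-- Cost of player `i` of the play `h·ρ` (cost in the subgame after `h`). -/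
noncomputable def costAfter (h : List (XV V P)) (ρ : ℕ → XV V P) (i : P) : ℕ∞ :=
  sInf ((fun k : ℕ => (k : ℕ∞)) '' {k | i ∈ (listAppendSeq h ρ k).2})

/-- `τ` is a unilateral deviation of player `i` from the profile `σ`. -/
def Deviation (own : V → P) (σ τ : List (XV V P) → XV V P → XV V P) (i : P) : Prop :=
  ∀ h v, own v.1 ≠ i → τ h v = σ h v

/-- Subgame perfect equilibrium of the initialized extended game. -/
def IsSPE (E : V → V → Prop) (F : P → Set V) (own : V → P) (x0 : XV V P)
    (σ : List (XV V P) → XV V P → XV V P) : Prop :=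
  StratValid E F σ ∧
  ∀ h v, IsHistoryFrom E F x0 h v → ∀ (i : P) τ, StratValid E F τ →
    Deviation own σ τ i →
    costAfter h (outcome σ h v) i ≤ costAfter h (outcome τ h v) i

/-- Plays of the base game from `v0`. -/
def IsPlayB (E : V → V → Prop) (v0 : V) (ρ : ℕ → V) : Prop :=
  ρ 0 = v0 ∧ ∀ k, E (ρ k) (ρ (k + 1))

/-- Cost of player `i` of the play `h·ρ` in the base game. -/
noncomputable def costB (F : P → Set V) (h : List V) (ρ : ℕ → V) (i : P) : ℕ∞ :=
  sInf ((fun k : ℕ => (k : ℕ∞)) '' {k | listAppendSeq h ρ k ∈ F i})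

/-- Validity of a strategy profile in the base game. -/
def StratValidB (E : V → V → Prop) (σ : List V → V → V) : Prop := ∀ h v, E v (σ h v)

/-- The outcome of a strategy profile of the base game after history `h` from `v`. -/
def outcomeB (σ : List V → V → V) : List V → V → ℕ → V
  | _, v, 0 => v
  | h, v, n + 1 => outcomeB σ (h ++ [v]) (σ h v) n

/-- `h·v` is a history of the initialized base game. -/
def IsHistoryB (E : V → V → Prop) (v0 : V) (h : List V) (v : V) : Prop :=
  (h ++ [v]).head? = some v0 ∧ (h ++ [v]).Chain' E

/-- `τ` is a unilateral deviation of player `i` from `σ` in the base game. -/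
def DeviationB (own : V → P) (σ τ : List V → V → V) (i : P) : Prop :=
  ∀ h v, own v ≠ i → τ h v = σ h v

/-- Subgame perfect equilibrium of the initialized base game. -/
def IsSPEB (E : V → V → Prop) (F : P → Set V) (own : V → P) (v0 : V)
    (σ : List V → V → V) : Prop :=
  StratValidB E σ ∧
  ∀ h v, IsHistoryB E v0 h v → ∀ (i : P) τ, StratValidB E τ →
    DeviationB own σ τ i →
    costB F h (outcomeB σ h v) i ≤ costB F h (outcomeB τ h v) i

section LassoCompression

variable {α : Type*} {R : α → α → Prop}

theorem exists_repeat_le_add_card (S : Finset α) {π : ℕ → α} (hS : ∀ k, π k ∈ S) (a : ℕ) :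
    ∃ i j, a ≤ i ∧ i < j ∧ j ≤ a + S.card ∧ π i = π j := by
  obtain ⟨i, hi, j, hj, hne, he⟩ :=
    Finset.exists_ne_map_eq_of_card_lt_of_maps_to (s := Finset.Icc a (a + S.card)) (t := S)
      (by simp only [Nat.card_Icc]; omega) (fun k _ => hS k)
  simp only [Finset.mem_Icc] at hi hj
  rcases hne.lt_or_gt with h | h
  · exact ⟨i, j, hi.1, h, hj.2, he⟩
  · exact ⟨j, i, hj.1, h, hi.2, he.symm⟩

/-- Cycle removal: `π ∘ G` is `π` with its cycles between positions `D` and `n` cut out. -/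
theorem exists_strictMono_reindex_short (S : Finset α) (D : ℕ) {π : ℕ → α}
    (hπ : ∀ k, R (π k) (π (k + 1))) (hS : ∀ k, π k ∈ S) {n : ℕ} (hDn : D ≤ n) :
    ∃ (G : ℕ → ℕ) (m : ℕ), StrictMono G ∧ (∀ k ≤ D, G k = k) ∧ m < S.card ∧
      π (G (D + m)) = π n ∧ ∀ k, R (π (G k)) (π (G (k + 1))) := by
  induction n using Nat.strong_induction_on generalizing π with
  | _ n ih =>
  by_cases hn : n < D + S.card
  · exact ⟨id, n - D, strictMono_id, fun _ _ => rfl, by omega, by simp [Nat.add_sub_cancel' hDn], hπ⟩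
  obtain ⟨i, j, hDi, hij, hj, he⟩ := exists_repeat_le_add_card S hS D
  let s : ℕ → ℕ := fun k => if k ≤ i then k else k + (j - i)
  have hs : StrictMono s := by
    refine strictMono_nat_of_lt_succ fun k => ?_
    simp only [s]
    split_ifs <;> omega
  have hπs : ∀ k, R (π (s k)) (π (s (k + 1))) := by
    intro k
    rcases lt_trichotomy k i with h | rfl | h
    · simpa [s, h.le, Nat.succ_le_of_lt h] using hπ k
    · simpa [s, he, show k + 1 + (j - k) = j + 1 by omega] using hπ j
    · simpa [s, show ¬ k ≤ i by omega, show ¬ k + 1 ≤ i by omega,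
        show k + 1 + (j - i) = k + (j - i) + 1 by omega] using hπ (k + (j - i))
  have hend : π (s (n - (j - i))) = π n := by
    by_cases h : n - (j - i) ≤ i
    · obtain rfl : j = n := by omega
      simp only [s, show j - (j - i) = i by omega, le_refl, if_true, he]
    · simp only [s, if_neg h, show n - (j - i) + (j - i) = n by omega]
  obtain ⟨G, m, hG, hGD, hm, hGm, hGR⟩ :=
    ih (n - (j - i)) (by omega) hπs (fun k => hS (s k)) (by omega)
  refine ⟨s ∘ G, m, hs.comp hG, fun k hk => ?_, hm, hGm.trans hend, hGR⟩
  simp [s, hGD k hk, show k ≤ i by omega]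

def seqAppend (n : ℕ) (f g : ℕ → α) : ℕ → α := fun k => if k ≤ n then f k else g (k - n)

theorem seqAppend_rel {n : ℕ} {f g : ℕ → α} (hf : ∀ k, R (f k) (f (k + 1)))
    (hg : ∀ k, R (g k) (g (k + 1))) (hfg : f n = g 0) (k : ℕ) :
    R (seqAppend n f g k) (seqAppend n f g (k + 1)) := by
  unfold seqAppend
  rcases lt_trichotomy k n with h | rfl | h
  · simpa [h.le, Nat.succ_le_of_lt h] using hf k
  · simpa [hfg] using hg 0
  · simpa [show ¬ k ≤ n by omega, show ¬ k + 1 ≤ n by omega,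
      show k + 1 - n = k - n + 1 by omega] using hg (k - n)

theorem rel_add_mod {π : ℕ → α} (hπ : ∀ k, R (π k) (π (k + 1))) {a q : ℕ} (hq : 0 < q)
    (he : π a = π (a + q)) (r : ℕ) : R (π (a + r % q)) (π (a + (r + 1) % q)) := by
  rw [← Nat.mod_add_mod]
  rcases Nat.lt_or_ge (r % q + 1) q with h | h
  · rw [Nat.mod_eq_of_lt h, ← add_assoc]
    exact hπ _
  · have hwrap : r % q + 1 = q := le_antisymm (Nat.mod_lt r hq) h
    rw [hwrap, Nat.mod_self, add_zero, he]
    simpa only [add_assoc, hwrap] using hπ (a + r % q)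

theorem exists_lasso_reindex (S : Finset α) {π : ℕ → α} (hπ : ∀ k, R (π k) (π (k + 1)))
    (hS : ∀ k, π k ∈ S) {D T : ℕ} (hDT : D ≤ T) :
    ∃ π' : ℕ → α, (∀ k, R (π' k) (π' (k + 1))) ∧ (∀ k ≤ D, π' k = π k) ∧
      (∀ k, ∃ t, min k T ≤ t ∧ π' k = π t) ∧
      ∃ p q : ℕ, 0 < q ∧ p + q ≤ D + 2 * S.card ∧ ∀ k, p ≤ k → π' (k + q) = π' k := by
  obtain ⟨a, b, hTa, hab, hb, he⟩ := exists_repeat_le_add_card S hS T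
  obtain ⟨G, m, hG, hGD, hm, hGm, hGR⟩ :=
    exists_strictMono_reindex_short S D hπ hS (hDT.trans hTa)
  have hq : 0 < b - a := by omega
  refine ⟨seqAppend (D + m) (π ∘ G) (fun r => π (a + r % (b - a))),
    seqAppend_rel hGR (rel_add_mod hπ hq (by rwa [Nat.add_sub_cancel' hab.le]))
      (by simpa using hGm),
    fun k hk => by simp [seqAppend, show k ≤ D + m by omega, hGD k hk], fun k => ?_,
    D + m + 1, b - a, hq, by omega, fun k hk => ?_⟩
  · by_cases hk : k ≤ D + m
    · exact ⟨G k, (min_le_left _ _).trans (hG.id_le k), by simp [seqAppend, hk]⟩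
    · exact ⟨a + (k - (D + m)) % (b - a),
        (min_le_right _ _).trans (hTa.trans (Nat.le_add_right _ _)), by simp [seqAppend, hk]⟩
  · simp [seqAppend, show ¬ k ≤ D + m by omega, show ¬ k + (b - a) ≤ D + m by omega,
      show k + (b - a) - (D + m) = k - (D + m) + (b - a) by omega]

end LassoCompression

theorem exists_forall_le_of_monotone {β : Type*} [PartialOrder β] [WellFoundedGT β]
    {s : ℕ → β} (hs : Monotone s) : ∃ T, ∀ t, s t ≤ s T := by
  obtain ⟨T, hT⟩ := WellFoundedGT.monotone_chain_condition ⟨s, hs⟩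
  refine ⟨T, fun t => ?_⟩
  rcases le_total t T with h | h
  · exact hs h
  · exact (hT t h).ge

theorem sInf_natCast_image_eq_one_add {p : ℕ → Prop} (h0 : ¬ p 0) :
    sInf ((↑) '' {k | p k} : Set ℕ∞) = 1 + sInf ((↑) '' {k | p (k + 1)}) := by
  apply le_antisymm
  · rw [ENat.add_sInf]
    refine le_iInf₂ ?_
    rintro _ ⟨k, hk, rfl⟩
    exact sInf_le ⟨k + 1, hk, by push_cast; ring⟩
  · refine le_sInf ?_
    rintro _ ⟨_ | k, hk, rfl⟩
    · exact absurd hk h0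
    · calc 1 + sInf ((↑) '' {k | p (k + 1)}) ≤ 1 + (k : ℕ∞) := by
            gcongr
            exact sInf_le ⟨k, hk, rfl⟩
        _ = ↑(k + 1) := by push_cast; ring

section Cost

variable {ρ ρ' : ℕ → XV V P} {n k : ℕ} {i : P}

theorem costFrom_le (h : i ∈ (ρ (n + k)).2) : costFrom ρ n i ≤ k :=
  sInf_le ⟨k, h, rfl⟩

theorem costFrom_eq_zero (h : i ∈ (ρ n).2) : costFrom ρ n i = 0 :=
  nonpos_iff_eq_zero.1 (costFrom_le (k := 0) h)

theorem costFrom_eq_one_add (h : i ∉ (ρ n).2) : costFrom ρ n i = 1 + costFrom ρ (n + 1) i := by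
  unfold costFrom
  rw [sInf_natCast_image_eq_one_add (p := fun k => i ∈ (ρ (n + k)).2) h]
  simp only [add_assoc, add_comm 1]

theorem cost_le (h : i ∈ (ρ k).2) : cost ρ i ≤ k :=
  costFrom_le (by rwa [zero_add])

theorem cost_eq_top_iff : cost ρ i = ⊤ ↔ ∀ k, i ∉ (ρ k).2 := by
  simp [cost, costFrom, sInf_eq_top]

theorem cost_le_of_reindex {T : ℕ} (hmono : Monotone fun k => (ρ k).2)
    (hT : ∀ t, (ρ t).2 ⊆ (ρ T).2) (hre : ∀ k, ∃ t, min k T ≤ t ∧ ρ' k = ρ t) :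
    cost ρ' i ≤ cost ρ i := by
  refine le_sInf ?_
  rintro _ ⟨k, hk, rfl⟩
  obtain ⟨t, ht, he⟩ := hre k
  refine cost_le (he ▸ ?_)
  rcases le_total k T with h | h
  · exact hmono (by simpa [h] using ht) (by simpa using hk)
  · exact hmono (by simpa [h] using ht) (hT k (by simpa using hk))

theorem le_cost_of_reindex {D : ℕ} {c : ℕ∞} (hD : ∀ k ≤ D, ρ' k = ρ k)
    (hre : ∀ k, ∃ t, ρ' k = ρ t) (hcD : c ≠ ⊤ → c ≤ D) (hc : c ≤ cost ρ i) :
    c ≤ cost ρ' i := by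
  by_cases htop : c = ⊤
  · subst htop
    rw [top_le_iff, cost_eq_top_iff] at hc ⊢
    intro k hk
    obtain ⟨t, he⟩ := hre k
    exact hc t (he ▸ hk)
  refine le_sInf ?_
  rintro _ ⟨k, hk, rfl⟩
  rcases le_or_gt k D with h | h
  · exact hc.trans (cost_le (by simpa [hD k h] using hk))
  · exact (hcD htop).trans (Nat.cast_le.2 h.le)

end Cost

def extPlay (F : P → Set V) (ρ : ℕ → V) : ℕ → XV V P :=
  fun k => (ρ k, {i | ∃ j ≤ k, ρ j ∈ F i})

section ExtPlay

variable {E : V → V → Prop} {F : P → Set V}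

theorem monotone_extPlay (ρ : ℕ → V) : Monotone fun k => (extPlay F ρ k).2 :=
  fun _ _ hst _ ⟨j, hj, hF⟩ => ⟨j, hj.trans hst, hF⟩

theorem extPlay_zero (ρ : ℕ → V) : extPlay F ρ 0 = (ρ 0, {i | ρ 0 ∈ F i}) := by
  simp [extPlay]

theorem xedge_extPlay {ρ : ℕ → V} (hρ : ∀ k, E (ρ k) (ρ (k + 1))) (k : ℕ) :
    XEdge E F (extPlay F ρ k) (extPlay F ρ (k + 1)) := by
  refine ⟨hρ k, Set.ext fun i => ?_⟩
  simp only [extPlay, Set.mem_union, Set.mem_ofPred_eq]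
  constructor
  · rintro ⟨j, hj, hF⟩
    rcases Nat.lt_or_ge j (k + 1) with h | h
    · exact Or.inl ⟨j, by omega, hF⟩
    · exact Or.inr (by rwa [show j = k + 1 by omega] at hF)
  · rintro (⟨j, hj, hF⟩ | hF)
    · exact ⟨j, by omega, hF⟩
    · exact ⟨k + 1, le_rfl, hF⟩

theorem eq_extPlay_of_xedge {ρ : ℕ → XV V P} (h0 : ρ 0 = ((ρ 0).1, {i | (ρ 0).1 ∈ F i}))
    (hρ : ∀ k, XEdge E F (ρ k) (ρ (k + 1))) : ρ = extPlay F fun k => (ρ k).1 := by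
  funext k
  induction k with
  | zero => rw [extPlay_zero]; exact h0
  | succ k ih =>
    have hext := xedge_extPlay (E := E) (F := F) (fun k => (hρ k).1) k
    exact Prod.ext rfl (by rw [(hρ k).2, ih, hext.2]; rfl)

theorem costB_nil_eq_cost_extPlay (ρ : ℕ → V) (i : P) :
    costB F [] ρ i = cost (extPlay F ρ) i := by
  have hnil : listAppendSeq [] ρ = ρ := funext fun k => by simp [listAppendSeq]
  rw [costB, hnil]
  apply le_antisymm
  · refine le_sInf ?_
    rintro _ ⟨k, ⟨j, hj, hF⟩, rfl⟩
    calc sInf ((↑) '' {k | ρ k ∈ F i}) ≤ (j : ℕ∞) := sInf_le ⟨j, hF, rfl⟩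
      _ ≤ k := Nat.cast_le.2 (by simpa using hj)
  · refine le_sInf ?_
    rintro _ ⟨k, hk, rfl⟩
    exact cost_le ⟨k, le_rfl, hk⟩

end ExtPlay

section CounterGraph

variable {E : V → V → Prop} {F : P → Set V} {own : V → P} {lam : XV V P → ℕ∞}

theorem one_le_lam (hfix : ∀ w, update E F own lam w = lam w) {w : XV V P}
    (hw : own w.1 ∉ w.2) : 1 ≤ lam w := by
  rw [← hfix w, update, if_neg hw]
  exact le_iInf₂ fun _ _ => le_self_add

theorem CEdge.counter_le {a b : CV V P} (h : CEdge E F own lam a b) {i : P} (hi : i ∉ b.1.2) :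
    b.2 i ≤ a.2 i - 1 := by
  rcases h.2 i with ⟨h1, -⟩ | ⟨-, -, -, he⟩ | ⟨-, -, -, he⟩
  · exact absurd h1 hi
  · exact he.le
  · exact he ▸ min_le_left _ _

theorem CEdge.counter_own_le {a b : CV V P} (h : CEdge E F own lam a b) :
    b.2 (own b.1.1) ≤ lam b.1 := by
  rcases h.2 (own b.1.1) with ⟨-, he⟩ | ⟨-, hne, -, -⟩ | ⟨-, -, -, he⟩
  · simp [he]
  · exact absurd rfl hne
  · exact he ▸ min_le_right _ _

section Path

variable {π : ℕ → CV V P} {v : XV V P}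

theorem one_le_counter (hfix : ∀ w, update E F own lam w = lam w)
    (h0 : π 0 = startC own lam v) (hπ : ∀ k, CEdge E F own lam (π k) (π (k + 1)))
    {n : ℕ} {i : P} (hi : i ∉ (π n).1.2) : 1 ≤ (π n).2 i := by
  cases n with
  | zero =>
    rw [h0] at hi ⊢
    unfold startC at hi ⊢
    dsimp only at hi ⊢
    split_ifs with ho
    · exact one_le_lam hfix (ho ▸ hi)
    · exact le_top
  | succ k =>
    rcases (hπ k).2 i with ⟨h1, -⟩ | ⟨-, -, hlt, he⟩ | ⟨hb, ho, hlt, he⟩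
    · exact absurd h1 hi
    · exact he ▸ ENat.le_sub_one_of_lt hlt
    · exact he ▸ le_min (ENat.le_sub_one_of_lt hlt) (one_le_lam hfix (ho ▸ hb))

theorem costFrom_le_counter (hfix : ∀ w, update E F own lam w = lam w)
    (h0 : π 0 = startC own lam v) (hπ : ∀ k, CEdge E F own lam (π k) (π (k + 1)))
    (n : ℕ) (i : P) : costFrom (fun k => (π k).1) n i ≤ (π n).2 i := by
  suffices h : ∀ c : ℕ, ∀ n, (π n).2 i ≤ c → costFrom (fun k => (π k).1) n i ≤ c by
    by_cases htop : (π n).2 i = ⊤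
    · simp [htop]
    · obtain ⟨c, hc⟩ := ENat.ne_top_iff_exists.1 htop
      rw [← hc]
      exact h c n hc.ge
  intro c
  induction c with
  | zero =>
    intro n hn
    by_cases hi : i ∈ (π n).1.2
    · exact (costFrom_eq_zero (ρ := fun k => (π k).1) hi).le
    · exact absurd ((one_le_counter hfix h0 hπ hi).trans hn) (by simp)
  | succ c ih =>
    intro n hn
    by_cases hi : i ∈ (π n).1.2
    · simp [costFrom_eq_zero (ρ := fun k => (π k).1) hi]
    rw [costFrom_eq_one_add (ρ := fun k => (π k).1) hi, Nat.cast_succ, add_comm]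
    gcongr
    by_cases hi' : i ∈ (π (n + 1)).1.2
    · simp [costFrom_eq_zero (ρ := fun k => (π k).1) hi']
    · refine ih (n + 1) (((hπ n).counter_le hi').trans ?_)
      calc (π n).2 i - 1 ≤ (c + 1 : ℕ∞) - 1 := tsub_le_tsub_right hn 1
        _ = c := by norm_cast

theorem consistent_of_cpath (hfix : ∀ w, update E F own lam w = lam w)
    (h0 : π 0 = startC own lam v) (hπ : ∀ k, CEdge E F own lam (π k) (π (k + 1))) :
    Consistent own lam fun k => (π k).1 := by
  intro n
  refine (costFrom_le_counter hfix h0 hπ n _).trans ?_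
  cases n with
  | zero =>
    show (π 0).2 (own (π 0).1.1) ≤ lam (π 0).1
    rw [h0]
    unfold startC
    dsimp only
    split_ifs <;> simp_all
  | succ k => exact (hπ k).counter_own_le

end Path

/-- The counters obtained by applying the edge rule of `𝐂(λ)` along `ρ`. -/
noncomputable def counters (own : V → P) (lam : XV V P → ℕ∞) (ρ : ℕ → XV V P) :
    ℕ → P → ℕ∞
  | 0 => (startC own lam (ρ 0)).2
  | k + 1 => fun i =>
      if i ∈ (ρ (k + 1)).2 then 0
      else if own (ρ (k + 1)).1 = i then min (counters own lam ρ k i - 1) (lam (ρ (k + 1)))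
      else counters own lam ρ k i - 1

variable {ρ : ℕ → XV V P}

theorem costFrom_le_counters (hmono : Monotone fun k => (ρ k).2)
    (hcons : Consistent own lam ρ) (k : ℕ) (i : P) :
    costFrom ρ k i ≤ counters own lam ρ k i := by
  induction k generalizing i with
  | zero =>
    simp only [counters, startC]
    split_ifs with hi ho
    · exact (costFrom_eq_zero hi).le
    · exact ho ▸ hcons 0
    · exact le_top
  | succ k ih =>
    simp only [counters]
    split_ifs with hi ho
    · exact (costFrom_eq_zero hi).le
    all_goals
      have hsub : costFrom ρ (k + 1) i ≤ counters own lam ρ k i - 1 :=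
        ENat.le_sub_of_add_le_left ENat.one_ne_top
          ((costFrom_eq_one_add fun h => hi (hmono k.le_succ h)).symm.le.trans (ih i))
    · exact le_min hsub (ho ▸ hcons (k + 1))
    · exact hsub

theorem cedge_counters (hmono : Monotone fun k => (ρ k).2) (hcons : Consistent own lam ρ)
    (hρ : ∀ k, XEdge E F (ρ k) (ρ (k + 1))) (k : ℕ) :
    CEdge E F own lam (ρ k, counters own lam ρ k) (ρ (k + 1), counters own lam ρ (k + 1)) := by
  refine ⟨hρ k, fun i => ?_⟩
  by_cases hi : i ∈ (ρ (k + 1)).2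
  · exact Or.inl ⟨hi, by simp [counters, hi]⟩
  have hlt : 1 < counters own lam ρ k i :=
    calc (1 : ℕ∞) < 1 + 1 := by norm_num
      _ ≤ 1 + costFrom ρ (k + 1) i := by
        gcongr
        rw [costFrom_eq_one_add hi]
        exact le_self_add
      _ = costFrom ρ k i := (costFrom_eq_one_add fun h => hi (hmono k.le_succ h)).symm
      _ ≤ _ := costFrom_le_counters hmono hcons k i
  by_cases ho : own (ρ (k + 1)).1 = i
  · exact Or.inr (Or.inr ⟨hi, ho, hlt, by simp [counters, hi, ho]⟩)
  · exact Or.inr (Or.inl ⟨hi, ho, hlt, by simp [counters, hi, ho]⟩)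

theorem counters_mem {s : Set ℕ∞} (h0 : 0 ∈ s) (htop : ⊤ ∈ s) (hsub : ∀ c ∈ s, c - 1 ∈ s)
    (hlam : ∀ w, lam w ∈ s) (k : ℕ) (i : P) : counters own lam ρ k i ∈ s := by
  induction k generalizing i with
  | zero =>
    simp only [counters, startC]
    split_ifs
    exacts [h0, hlam _, htop]
  | succ k ih =>
    simp only [counters]
    split_ifs
    · exact h0
    · rcases min_choice (counters own lam ρ k i - 1) (lam (ρ (k + 1))) with h | h <;> rw [h]
      exacts [hsub _ (ih i), hlam _]
    · exact hsub _ (ih i)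

end CounterGraph

theorem lam_le_mR [Finite V] [Finite P] (lam : XV V P → ℕ∞) {w : XV V P} (h : lam w ≠ ⊤) :
    lam w ≤ mR lam Set.univ := by
  obtain ⟨c, hc⟩ := ENat.ne_top_iff_exists.1 h
  rw [← hc]
  refine Nat.cast_le.2 (le_csSup ?_ ⟨w, Set.mem_univ _, hc.symm⟩)
  refine ((Set.finite_range fun w => (lam w).toNat).subset ?_).bddAbove
  rintro _ ⟨w', -, hw'⟩
  exact ⟨w', by simp [hw']⟩

def counterValues (M : ℕ) : Finset ℕ∞ :=
  insert ⊤ ((Finset.range (M + 1)).image (↑))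

theorem mem_counterValues {M : ℕ} {c : ℕ∞} : c ∈ counterValues M ↔ c = ⊤ ∨ c ≤ M := by
  induction c using ENat.recTopCoe with
  | top => simp [counterValues]
  | coe c => simp [counterValues]

theorem card_counterValues_le (M : ℕ) : (counterValues M).card ≤ M + 2 :=
  (Finset.card_insert_le _ _).trans (by simpa using Finset.card_image_le (s := Finset.range (M + 1)))

noncomputable def counterVertices [Fintype V] [Fintype P] (M : ℕ) : Finset (CV V P) :=
  Finset.univ ×ˢ Fintype.piFinset fun _ => counterValues M

theorem card_counterVertices_le [Fintype V] [Fintype P] (M : ℕ) :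
    (counterVertices (V := V) (P := P) M).card ≤
      Fintype.card V * 2 ^ Fintype.card P * (M + 2) ^ Fintype.card P := by
  rw [counterVertices, Finset.card_product, Finset.card_univ, Fintype.card_prod,
    Fintype.card_set, Fintype.card_piFinset]
  gcongr
  simpa using Finset.prod_le_pow_card Finset.univ _ _ fun i _ => card_counterValues_le M

theorem counters_mem_counterVertices [Fintype V] [Fintype P] {own : V → P}
    {lam : XV V P → ℕ∞} (ρ : ℕ → XV V P) (k : ℕ) :
    (ρ k, counters own lam ρ k) ∈ counterVertices (mR lam Set.univ) := by
  refine Finset.mem_product.2 ⟨Finset.mem_univ _, Fintype.mem_piFinset.2 fun i => ?_⟩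
  refine counters_mem (s := (counterValues (mR lam Set.univ) : Set ℕ∞)) ?_ ?_ ?_ ?_ k i
  · simp [mem_counterValues]
  · simp [mem_counterValues]
  · intro c hc
    rcases mem_counterValues.1 hc with rfl | hc
    · simp [mem_counterValues]
    · exact mem_counterValues.2 (Or.inr (tsub_le_self.trans hc))
  · intro w
    by_cases h : lam w = ⊤
    · exact mem_counterValues.2 (Or.inl h)
    · exact mem_counterValues.2 (Or.inr (lam_le_mR lam h))

theorem exists_lasso_cpath [Fintype V] [Fintype P] {E : V → V → Prop} {F : P → Set V}
    {own : V → P} {lam : XV V P → ℕ∞} {ρ : ℕ → V} (hρ : ∀ k, E (ρ k) (ρ (k + 1)))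
    (hcons : Consistent own lam (extPlay F ρ)) {x y : P → ℕ∞} {D : ℕ}
    (hxD : ∀ i, x i ≠ ⊤ → x i ≤ D)
    (hxy : ∀ i, x i ≤ cost (extPlay F ρ) i ∧ cost (extPlay F ρ) i ≤ y i) :
    ∃ π : ℕ → CV V P, π 0 = startC own lam (ρ 0, {i | ρ 0 ∈ F i}) ∧
      (∀ k, CEdge E F own lam (π k) (π (k + 1))) ∧
      (∃ p q : ℕ, 0 < q ∧
        p + q ≤ D + 2 * (Fintype.card V * 2 ^ Fintype.card P *
          (mR lam Set.univ + 2) ^ Fintype.card P) ∧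
        ∀ k, p ≤ k → π (k + q) = π k) ∧
      ∀ i, x i ≤ cost (fun k => (π k).1) i ∧ cost (fun k => (π k).1) i ≤ y i := by
  have hmono := monotone_extPlay (F := F) ρ
  obtain ⟨T, hT⟩ := exists_forall_le_of_monotone hmono
  have hT' : ∀ t, (extPlay F ρ t).2 ⊆ (extPlay F ρ (max D T)).2 :=
    fun t => (hT t).trans (hmono (le_max_right D T))
  obtain ⟨π, hπ, hπD, hre, p, q, hq, hpq, hper⟩ :=
    exists_lasso_reindex (counterVertices (mR lam Set.univ))
      (cedge_counters hmono hcons (xedge_extPlay hρ)) (counters_mem_counterVertices _)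
      (le_max_left D T)
  have hπD' : ∀ k ≤ D, (π k).1 = extPlay F ρ k := fun k hk => congrArg Prod.fst (hπD k hk)
  have hre' : ∀ k, ∃ t, min k (max D T) ≤ t ∧ (π k).1 = extPlay F ρ t :=
    fun k => (hre k).imp fun _ h => ⟨h.1, congrArg Prod.fst h.2⟩
  refine ⟨π, ?_, hπ, ⟨p, q, hq, hpq.trans ?_, hper⟩, fun i => ⟨?_, ?_⟩⟩
  · rw [hπD 0 (Nat.zero_le _), ← extPlay_zero]
    rfl
  · gcongr
    exact card_counterVertices_le _
  · exact le_cost_of_reindex hπD' (fun k => (hre' k).imp fun _ => And.right) (hxD i) (hxy i).1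
  · exact (cost_le_of_reindex hmono hT' hre').trans (hxy i).2

theorem outcomeB_edge {E : V → V → Prop} {σ : List V → V → V} (hσ : StratValidB E σ) (n : ℕ) :
    ∀ (h : List V) (v : V), E (outcomeB σ h v n) (outcomeB σ h v (n + 1)) := by
  induction n with
  | zero => exact hσ
  | succ n ih => exact fun h v => ih (h ++ [v]) (σ h v)

theorem stmt16_general {V P : Type*} [Fintype V] [Fintype P]
    (E : V → V → Prop) (F : P → Set V) (own : V → P) (v0 : V)
    (lam : XV V P → ℕ∞)
    (hfix : ∀ w, update E F own lam w = lam w)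
    (hchar : ∀ ρ : ℕ → V, ρ 0 = v0 → (∀ k, E (ρ k) (ρ (k + 1))) →
      ((∃ σ, IsSPEB E F own v0 σ ∧ ∀ k, outcomeB σ [] v0 k = ρ k) ↔
        Consistent own lam fun k => (ρ k, {i | ∃ j ≤ k, ρ j ∈ F i})))
    (x y : P → ℕ∞) :
    (∃ σ, IsSPEB E F own v0 σ ∧
      ∀ i, x i ≤ costB F [] (fun k => outcomeB σ [] v0 k) i ∧
        costB F [] (fun k => outcomeB σ [] v0 k) i ≤ y i) ↔
    (∃ π : ℕ → CV V P,
      π 0 = startC own lam (v0, {i | v0 ∈ F i}) ∧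
      (∀ k, CEdge E F own lam (π k) (π (k + 1))) ∧
      (∃ p q : ℕ, 0 < q ∧
        p + q ≤ (Finset.univ.sup fun i => (x i).toNat) +
          2 * (Fintype.card V * 2 ^ Fintype.card P *
            (mR lam Set.univ + 2) ^ Fintype.card P) ∧
        ∀ k, p ≤ k → π (k + q) = π k) ∧
      ∀ i, x i ≤ cost (fun k => (π k).1) i ∧ cost (fun k => (π k).1) i ≤ y i) := by
  constructor
  · rintro ⟨σ, hσ, hxy⟩
    have hρ := fun k => outcomeB_edge hσ.1 k [] v0
    have hcons := (hchar _ rfl hρ).1 ⟨σ, hσ, fun _ => rfl⟩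
    refine exists_lasso_cpath hρ hcons (fun i hi => ?_)
      fun i => costB_nil_eq_cost_extPlay (F := F) _ i ▸ hxy i
    rw [← ENat.natCast_toNat hi]
    exact Nat.cast_le.2 (Finset.le_sup (f := fun i => (x i).toNat) (Finset.mem_univ i))
  · rintro ⟨π, h0, hπ, -, hxy⟩
    have hext : (fun k => (π k).1) = extPlay F fun k => (π k).1.1 :=
      eq_extPlay_of_xedge (by rw [h0]; rfl) fun k => (hπ k).1
    obtain ⟨σ, hσ, hout⟩ := (hchar _ (by rw [h0]; rfl) fun k => (hπ k).1.1).2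
      (show Consistent own lam (extPlay F _) from hext ▸ consistent_of_cpath hfix h0 hπ)
    refine ⟨σ, hσ, fun i => ?_⟩
    rw [show (fun k => outcomeB σ [] v0 k) = fun k => (π k).1.1 from funext hout,
      costB_nil_eq_cost_extPlay, ← hext]
    exact hxy i

/-- the initialized reachability game `(G, v₀)` has an SPE with cost
profile between `x` and `y` if and only if the counter graph `𝐂(λ*)` contains an
infinite lasso path `h·g^ω` from `x₀^C` with `|hg| ≤ d + 2·|𝐂(λ*)|`, where
`d = max{x_i : x_i < +∞}`, whose corresponding play has cost profile between
`x` and `y`. -/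
theorem stmt16 {V P : Type*} [Fintype V] [Fintype P]
    (E : V → V → Prop) (F : P → Set V) (own : V → P) (v0 : V)
    (htot : ∀ u : V, ∃ w, E u w)
    (lam : XV V P → ℕ∞)
    (hfix : ∀ w, update E F own lam w = lam w)
    (hchar : ∀ ρ : ℕ → V, ρ 0 = v0 → (∀ k, E (ρ k) (ρ (k + 1))) →
      ((∃ σ, IsSPEB E F own v0 σ ∧ ∀ k, outcomeB σ [] v0 k = ρ k) ↔
        Consistent own lam fun k => (ρ k, {i | ∃ j ≤ k, ρ j ∈ F i})))
    (x y : P → ℕ∞) :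
    (∃ σ, IsSPEB E F own v0 σ ∧
      ∀ i, x i ≤ costB F [] (fun k => outcomeB σ [] v0 k) i ∧
        costB F [] (fun k => outcomeB σ [] v0 k) i ≤ y i) ↔
    (∃ π : ℕ → CV V P,
      π 0 = startC own lam (v0, {i | v0 ∈ F i}) ∧
      (∀ k, CEdge E F own lam (π k) (π (k + 1))) ∧
      (∃ p q : ℕ, 0 < q ∧
        p + q ≤ (Finset.univ.sup fun i => (x i).toNat) +
          2 * (Fintype.card V * 2 ^ Fintype.card P *
            (mR lam Set.univ + 2) ^ Fintype.card P) ∧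
        ∀ k, p ≤ k → π (k + q) = π k) ∧
      ∀ i, x i ≤ cost (fun k => (π k).1) i ∧ cost (fun k => (π k).1) i ≤ y i) :=
  stmt16_general E F own v0 lam hfix hchar x y

end SPE
end

section
/- In any play ρ from q₁ of the QBF-reduction game 𝒢_ψ, Cost_{n+1}(ρ) < +∞ if and only if Cost_{n+2}(ρ) = +∞; moreover, if ρ reaches t_{n+1}, then (Cost_i(ρ) ≤ 2m for all clause-players i ∈ {1,...,n}) if and only if ρ visits, for each clause C_i, some vertex that is a literal of C_i. -/
open scoped Classical

namespace SPE

variable {V : Type*} {P : Type*}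

/-! ### The QBF reduction game `𝒢_ψ` -/

/-- Vertices of the game `𝒢_ψ`: quantifier vertices `q k`, literal vertices `lit k b`,
clause vertices `c j`, and sinks `t j` (where `t ⟨n, _⟩` is the sink `t_{n+1}`). -/
inductive QVtx (m n : ℕ) : Type
  | q : Fin m → QVtx m n
  | lit : Fin m → Bool → QVtx m n
  | c : Fin n → QVtx m n
  | t : Fin (n + 1) → QVtx m n

/-- Edges of the game `𝒢_ψ`. -/
inductive QEdge (m n : ℕ) : QVtx m n → QVtx m n → Prop
  | qlit (k : Fin m) (b : Bool) : QEdge m n (.q k) (.lit k b)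
  | litq (k : Fin m) (b : Bool) (h : k.val + 1 < m) :
      QEdge m n (.lit k b) (.q ⟨k.val + 1, h⟩)
  | litc (k : Fin m) (b : Bool) (h : k.val + 1 = m) (hn : 0 < n) :
      QEdge m n (.lit k b) (.c ⟨0, hn⟩)
  | ct (j : Fin n) : QEdge m n (.c j) (.t ⟨j.val, Nat.lt_succ_of_lt j.isLt⟩)
  | cc (j : Fin n) (h : j.val + 1 < n) : QEdge m n (.c j) (.c ⟨j.val + 1, h⟩)
  | clast (j : Fin n) (h : j.val + 1 = n) : QEdge m n (.c j) (.t ⟨n, Nat.lt_succ_self n⟩)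
  | tt (j : Fin (n + 1)) : QEdge m n (.t j) (.t j)

/-- Owner of each vertex: clause-player `j` owns `c j`; player `n` (the paper's
player `n+1`) owns the existential quantifier vertices, player `n+1` (the paper's
player `n+2`) owns the universal ones; other vertices have a single successor and
their owner is irrelevant. -/
def qOwn (m n : ℕ) : QVtx m n → Fin (n + 2)
  | .q k => if k.val % 2 = 0 then ⟨n, by omega⟩ else ⟨n + 1, by omega⟩
  | .lit _ _ => ⟨n, by omega⟩
  | .c j => ⟨j.val, Nat.lt_of_lt_of_le j.isLt (by omega)⟩
  | .t _ => ⟨n, by omega⟩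

/-- Target sets: `F_j = {literals of C_j} ∪ {t_j}` for clause players `j < n`,
`F_{n} = {t_{n+1}}` and `F_{n+1} = {t_1, …, t_n}`. -/
def qF {m n : ℕ} (Cl : Fin n → Finset (Fin m × Bool)) : Fin (n + 2) → Set (QVtx m n) :=
  fun i =>
    {v | (∃ hi : i.val < n,
            (∃ p ∈ Cl ⟨i.val, hi⟩, v = QVtx.lit p.1 p.2) ∨
            v = QVtx.t ⟨i.val, by omega⟩) ∨
         (i.val = n ∧ v = QVtx.t ⟨n, Nat.lt_succ_self n⟩) ∨
         (i.val = n + 1 ∧ ∃ j : Fin n, v = QVtx.t ⟨j.val, Nat.lt_succ_of_lt j.isLt⟩)}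

/-- A valuation satisfies the conjunction of clauses `C_1 ∧ … ∧ C_n`. -/
def qSat {m n : ℕ} (Cl : Fin n → Finset (Fin m × Bool)) (ν : Fin m → Bool) : Prop :=
  ∀ j, ∃ p ∈ Cl j, ν p.1 = p.2

/-- Truth of `Q₁x₁ … Q_m x_m (C₁ ∧ … ∧ C_n)` with alternating quantifiers
(`Q₁ = ∃`), given the partial assignment `l` of the first variables. -/
def qbfAux {m n : ℕ} (Cl : Fin n → Finset (Fin m × Bool)) (l : List Bool) : Prop :=
  if _h : m ≤ l.length then qSat Cl fun v => l.getD v.val false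
  else if l.length % 2 = 0 then ∃ b, qbfAux Cl (l ++ [b])
  else ∀ b, qbfAux Cl (l ++ [b])
termination_by m - l.length
decreasing_by
  all_goals simp only [List.length_append, List.length_cons, List.length_nil]; omega

/-- Truth of the fully quantified Boolean formula `ψ`. -/
def QBFTrue {m n : ℕ} (Cl : Fin n → Finset (Fin m × Bool)) : Prop := qbfAux Cl []

/-! A play from `q₁` first runs through the `2m` quantifier and literal vertices, then walks
down the clause chain `c₁, c₂, …` and is absorbed by exactly one sink: every play reaches a
sink within `2m + n` steps, and a sink is never left. Hence exactly one of players `n+1`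
(target `t_{n+1}`) and `n+2` (targets `t₁, …, t_n`) reaches its target. Literal vertices
occur only before time `2m`, and a play ending in `t_{n+1}` never visits `t_i` for `i ≤ n`,
so clause player `i` pays at most `2m` exactly when a literal of `C_i` is visited. -/

theorem costB_nil_lt_top_iff (F : P → Set V) (ρ : ℕ → V) (i : P) :
    costB F [] ρ i < ⊤ ↔ ∃ k, ρ k ∈ F i := by
  simp [costB, listAppendSeq, sInf_lt_iff]

theorem costB_nil_le_iff (F : P → Set V) (ρ : ℕ → V) (i : P) (N : ℕ) :
    costB F [] ρ i ≤ N ↔ ∃ k ≤ N, ρ k ∈ F i := by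
  rw [← ENat.lt_add_one_iff (ENat.natCast_ne_top N)]
  simp [costB, listAppendSeq, sInf_lt_iff, ENat.lt_add_one_iff, and_comm]

namespace QEdge

variable {m n : ℕ} {v : QVtx m n}

theorem eq_of_t {j : Fin (n + 1)} (h : QEdge m n (.t j) v) : v = .t j := by
  cases h; rfl

theorem exists_of_q {k : Fin m} (h : QEdge m n (.q k) v) : ∃ b, v = .lit k b := by
  cases h; exact ⟨_, rfl⟩

theorem of_lit {k : Fin m} {b : Bool} (h : QEdge m n (.lit k b) v) :
    (∃ h' : k.val + 1 < m, v = .q ⟨k.val + 1, h'⟩) ∨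
      (k.val + 1 = m ∧ ∃ hn : 0 < n, v = .c ⟨0, hn⟩) := by
  cases h with
  | litq _ _ h => exact .inl ⟨h, rfl⟩
  | litc _ _ h hn => exact .inr ⟨h, hn, rfl⟩

theorem of_c {j : Fin n} (h : QEdge m n (.c j) v) :
    (∃ h' : j.val + 1 < n, v = .c ⟨j.val + 1, h'⟩) ∨ ∃ j', v = .t j' := by
  cases h with
  | ct => exact .inr ⟨_, rfl⟩
  | cc _ h => exact .inl ⟨h, rfl⟩
  | clast => exact .inr ⟨_, rfl⟩

end QEdge

section Play

variable {m n : ℕ} {ρ : ℕ → QVtx m n} (hE : ∀ k, QEdge m n (ρ k) (ρ (k + 1)))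
include hE

theorem qEdge_of_eq {k : ℕ} {v : QVtx m n} (h : ρ k = v) : QEdge m n v (ρ (k + 1)) :=
  h ▸ hE k

theorem qPlay_eq_t_of_le {a b : ℕ} {j : Fin (n + 1)} (ha : ρ a = .t j) (hab : a ≤ b) :
    ρ b = .t j := by
  induction b, hab using Nat.le_induction with
  | base => exact ha
  | succ b _ ih => exact (qEdge_of_eq hE ih).eq_of_t

theorem qPlay_sink_unique {a b : ℕ} {j j' : Fin (n + 1)} (ha : ρ a = .t j) (hb : ρ b = .t j') :
    j = j' := by
  have h := qPlay_eq_t_of_le hE ha (le_max_left a b)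
  rw [qPlay_eq_t_of_le hE hb (le_max_right a b)] at h
  exact (QVtx.t.inj h).symm

variable {hm : 0 < m} (h0 : ρ 0 = .q ⟨0, hm⟩)
include h0

theorem qPlay_quantifier_phase (k : ℕ) (hk : k < m) :
    ρ (2 * k) = .q ⟨k, hk⟩ ∧ ∃ b, ρ (2 * k + 1) = .lit ⟨k, hk⟩ b := by
  induction k with
  | zero => exact ⟨h0, (qEdge_of_eq hE h0).exists_of_q⟩
  | succ k ih =>
    obtain ⟨-, b, hb⟩ := ih (by omega)
    rcases (qEdge_of_eq hE hb).of_lit with ⟨_, hq⟩ | ⟨hkm, -⟩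
    · have hq : ρ (2 * (k + 1)) = .q ⟨k + 1, hk⟩ := hq
      exact ⟨hq, (qEdge_of_eq hE hq).exists_of_q⟩
    · exact absurd (show k + 1 = m from hkm) (by omega)

theorem qPlay_clause_phase (d : ℕ) :
    (∃ h : d < n, ρ (2 * m + d) = .c ⟨d, h⟩) ∨ ∃ j, ρ (2 * m + d) = .t j := by
  induction d with
  | zero =>
    obtain ⟨-, b, hb⟩ := qPlay_quantifier_phase hE h0 (m - 1) (by omega)
    rcases (qEdge_of_eq hE hb).of_lit with ⟨h, -⟩ | ⟨-, hn, hc⟩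
    · exact absurd (show m - 1 + 1 < m from h) (by omega)
    · exact .inl ⟨hn, by rwa [show 2 * (m - 1) + 1 + 1 = 2 * m by omega] at hc⟩
  | succ d ih =>
    rcases ih with ⟨_, hc⟩ | ⟨j, ht⟩
    · exact (qEdge_of_eq hE hc).of_c
    · exact .inr ⟨j, (qEdge_of_eq hE ht).eq_of_t⟩

theorem qPlay_exists_sink : ∃ k j, ρ k = .t j := by
  rcases qPlay_clause_phase hE h0 n with ⟨h, -⟩ | ⟨j, hj⟩
  · exact absurd h (lt_irrefl n)
  · exact ⟨_, j, hj⟩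

theorem qPlay_lt_of_eq_lit {k : ℕ} {x : Fin m} {b : Bool} (hk : ρ k = .lit x b) : k < 2 * m := by
  by_contra! hle
  obtain ⟨d, rfl⟩ := Nat.exists_eq_add_of_le hle
  rcases qPlay_clause_phase hE h0 d with ⟨_, h⟩ | ⟨_, h⟩ <;> rw [hk] at h <;> cases h

end Play

section Targets

variable {m n : ℕ} (Cl : Fin n → Finset (Fin m × Bool)) (v : QVtx m n)

theorem mem_qF_existential_iff : v ∈ qF Cl ⟨n, by omega⟩ ↔ v = .t ⟨n, Nat.lt_succ_self n⟩ := by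
  grind [qF]

theorem mem_qF_universal_iff :
    v ∈ qF Cl ⟨n + 1, by omega⟩ ↔ ∃ j : Fin n, v = .t ⟨j, Nat.lt_succ_of_lt j.isLt⟩ := by
  grind [qF]

theorem mem_qF_clause_iff (j : Fin n) :
    v ∈ qF Cl ⟨j, by omega⟩ ↔
      (∃ p ∈ Cl j, v = .lit p.1 p.2) ∨ v = .t ⟨j, Nat.lt_succ_of_lt j.isLt⟩ := by
  grind [qF]

end Targets

section Costs

variable {m n : ℕ} {ρ : ℕ → QVtx m n} (hE : ∀ k, QEdge m n (ρ k) (ρ (k + 1)))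
  {hm : 0 < m} (h0 : ρ 0 = .q ⟨0, hm⟩)
include hE h0

theorem qPlay_exists_eq_t_last_iff :
    (∃ k, ρ k = .t ⟨n, Nat.lt_succ_self n⟩) ↔
      ¬∃ k, ∃ j : Fin n, ρ k = .t ⟨j, Nat.lt_succ_of_lt j.isLt⟩ := by
  constructor
  · rintro ⟨k, hk⟩ ⟨k', j, hk'⟩
    exact j.isLt.ne' (congrArg Fin.val (qPlay_sink_unique hE hk hk'))
  · intro havoid
    obtain ⟨k, j, hk⟩ := qPlay_exists_sink hE h0
    obtain ⟨j, hj⟩ | rfl := Fin.eq_castSucc_or_eq_last j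
    · subst hj
      exact absurd ⟨k, j, hk⟩ havoid
    · exact ⟨k, hk⟩

theorem costB_qF_clause_le_iff (Cl : Fin n → Finset (Fin m × Bool))
    (hreach : ∃ k, ρ k = .t ⟨n, Nat.lt_succ_self n⟩) (j : Fin n) :
    costB (qF Cl) [] ρ ⟨j, by omega⟩ ≤ ((2 * m : ℕ) : ℕ∞) ↔
      ∃ k, ∃ p ∈ Cl j, ρ k = .lit p.1 p.2 := by
  rw [costB_nil_le_iff]
  simp only [mem_qF_clause_iff]
  constructor
  · rintro ⟨k, -, ⟨p, hp, hk⟩ | hk⟩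
    · exact ⟨k, p, hp, hk⟩
    · exact absurd ⟨k, j, hk⟩ ((qPlay_exists_eq_t_last_iff hE h0).1 hreach)
  · rintro ⟨k, p, hp, hk⟩
    exact ⟨k, (qPlay_lt_of_eq_lit hE h0 hk).le, .inl ⟨p, hp, hk⟩⟩

end Costs

/-- in any play `ρ` from `q₁` of the QBF-reduction game `𝒢_ψ`,
player `n+1` has finite cost iff player `n+2` has infinite cost; moreover, if `ρ`
reaches `t_{n+1}`, then every clause player has cost at most `2m` iff `ρ` visits a
literal of every clause. -/
theorem stmt18 (m n : ℕ) (hm : 0 < m)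
    (Cl : Fin n → Finset (Fin m × Bool))
    (ρ : ℕ → QVtx m n) (hρ : IsPlayB (QEdge m n) (QVtx.q ⟨0, hm⟩) ρ) :
    (costB (qF Cl) [] ρ ⟨n, by omega⟩ < ⊤ ↔
      costB (qF Cl) [] ρ ⟨n + 1, by omega⟩ = ⊤) ∧
    ((∃ k, ρ k = QVtx.t ⟨n, Nat.lt_succ_self n⟩) →
      ((∀ i : Fin (n + 2), i.val < n → costB (qF Cl) [] ρ i ≤ ((2 * m : ℕ) : ℕ∞)) ↔
        ∀ j : Fin n, ∃ k, ∃ p ∈ Cl j, ρ k = QVtx.lit p.1 p.2)) := by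
  obtain ⟨h0, hE⟩ := hρ
  refine ⟨?_, fun hreach => ?_⟩
  · rw [← not_lt_top_iff, costB_nil_lt_top_iff, costB_nil_lt_top_iff]
    simp only [mem_qF_existential_iff, mem_qF_universal_iff]
    exact qPlay_exists_eq_t_last_iff hE h0
  · have hclause := costB_qF_clause_le_iff hE h0 Cl hreach
    exact ⟨fun h j => (hclause j).1 (h _ j.isLt), fun h i hi => (hclause ⟨i, hi⟩).2 (h _)⟩

end SPE
end
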